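/- arXiv:1211.6509 — 2 statements merged into one kernel-verified Lean document; each statement's English description precedes it below -/
import Mathlib

section
/- Hence for any prime p, the proportion of matrices in SL(2, ℤ/pℤ) with trace 2 equals p / (p² - 1). -/
open Matrix Finset

section aux

variable (p : ℕ) [Fact p.Prime]

/-- For `s ≠ 0`, solutions of `b*c = s` biject with units. -/
private def fiberEquivNe (s : ZMod p) (hs : s ≠ 0) :
    {x : ZMod p × ZMod p // x.1 * x.2 = s} ≃ (ZMod p)ˣ where
  toFun x := Units.mk0 x.1.1 (by
    intro h
    apply hs
    rw [← x.2, h, zero_mul])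
  invFun u := ⟨((u : ZMod p), (u : ZMod p)⁻¹ * s), by
    rw [← mul_assoc, mul_inv_cancel₀ (Units.ne_zero u), one_mul]⟩
  left_inv := by
    rintro ⟨⟨a, b⟩, h⟩
    have ha : a ≠ 0 := fun h0 => hs (by rw [← h, h0, zero_mul])
    apply Subtype.ext
    apply Prod.ext
    · rfl
    · show a⁻¹ * s = b
      rw [← h, ← mul_assoc, inv_mul_cancel₀ ha, one_mul]
  right_inv u := by
    apply Units.ext
    rfl

/-- Solutions of `b*c = 0`. -/
private def fiberEquivZero :
    {x : ZMod p × ZMod p // x.1 * x.2 = 0} ≃ (ZMod p) ⊕ {y : ZMod p // y ≠ 0} where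
  toFun x := if h : x.1.1 = 0 then Sum.inl x.1.2 else Sum.inr ⟨x.1.1, h⟩
  invFun y := y.elim (fun b => ⟨(0, b), by simp⟩) (fun a => ⟨(a.1, 0), by simp⟩)
  left_inv x := by
    rcases x with ⟨⟨a, b⟩, h⟩
    by_cases ha : a = 0
    · simp [ha]
    · have hb : b = 0 := by
        rcases mul_eq_zero.mp h with h' | h'
        · exact absurd h' ha
        · exact h'
      simp [ha, hb]
  right_inv y := by
    rcases y with b | ⟨a, ha⟩
    · simp
    · simp [ha]

private lemma card_fiber (s : ZMod p) :
    Nat.card {x : ZMod p × ZMod p // x.1 * x.2 = s} =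
      if s = 0 then 2 * p - 1 else p - 1 := by
  have hp : 2 ≤ p := (Fact.out : p.Prime).two_le
  by_cases hs : s = 0
  · subst hs
    rw [if_pos rfl, Nat.card_congr ((fiberEquivZero p).trans
      ((Equiv.refl (ZMod p)).sumCongr unitsEquivNeZero.symm)), Nat.card_sum,
      Nat.card_eq_fintype_card, Nat.card_eq_fintype_card, ZMod.card p, ZMod.card_units p]
    omega
  · rw [if_neg hs, Nat.card_congr (fiberEquivNe p s hs), Nat.card_eq_fintype_card,
      ZMod.card_units p]

private def slEquiv :
    Matrix.SpecialLinearGroup (Fin 2) (ZMod p) ≃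
      Σ ad : ZMod p × ZMod p, {x : ZMod p × ZMod p // x.1 * x.2 = ad.1 * ad.2 - 1} where
  toFun M := ⟨(M.1 0 0, M.1 1 1), ⟨(M.1 0 1, M.1 1 0), by
    have h := M.2
    rw [det_fin_two] at h
    linear_combination -h⟩⟩
  invFun v := ⟨!![v.1.1, v.2.1.1; v.2.1.2, v.1.2], by
    rw [det_fin_two_of]
    linear_combination -v.2.2⟩
  left_inv M := by
    apply Subtype.ext
    exact (Matrix.eta_fin_two M.1).symm
  right_inv v := by
    rcases v with ⟨⟨a, d⟩, ⟨⟨b, c⟩, h⟩⟩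
    rfl

private def trEquiv :
    {M : Matrix.SpecialLinearGroup (Fin 2) (ZMod p) //
        Matrix.trace (M : Matrix (Fin 2) (Fin 2) (ZMod p)) = 2} ≃
      Σ a : ZMod p, {x : ZMod p × ZMod p // x.1 * x.2 = -(a - 1) ^ 2} where
  toFun M := ⟨M.1.1 0 0, ⟨(M.1.1 0 1, M.1.1 1 0), by
    have hd := M.1.2
    rw [det_fin_two] at hd
    have ht := M.2
    rw [trace_fin_two] at ht
    linear_combination -hd + M.1.1 0 0 * ht⟩⟩
  invFun v := ⟨⟨!![v.1, v.2.1.1; v.2.1.2, 2 - v.1], by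
      rw [det_fin_two_of]
      linear_combination -v.2.2⟩, by
    show Matrix.trace !![v.1, v.2.1.1; v.2.1.2, 2 - v.1] = 2
    rw [trace_fin_two]
    simp⟩
  left_inv M := by
    rcases M with ⟨⟨A, hA⟩, hT⟩
    have ht : A 0 0 + A 1 1 = 2 := by
      rw [← trace_fin_two]
      exact hT
    apply Subtype.ext
    apply Subtype.ext
    show !![A 0 0, A 0 1; A 1 0, 2 - A 0 0] = A
    have h2 : (2 : ZMod p) - A 0 0 = A 1 1 := by linear_combination -ht
    rw [h2]
    exact (Matrix.eta_fin_two A).symm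
  right_inv v := by
    rcases v with ⟨a, ⟨⟨b, c⟩, h⟩⟩
    rfl

private lemma card_SL :
    Nat.card (Matrix.SpecialLinearGroup (Fin 2) (ZMod p)) = p ^ 3 - p := by
  have hp : 2 ≤ p := (Fact.out : p.Prime).two_le
  rw [Nat.card_congr (slEquiv p), Nat.card_eq_fintype_card, Fintype.card_sigma]
  simp only [← Nat.card_eq_fintype_card, card_fiber, sub_eq_zero]
  rw [Finset.sum_ite, Finset.sum_const, Finset.sum_const]
  have h1 : (Finset.univ.filter fun ad : ZMod p × ZMod p => ad.1 * ad.2 = 1).card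
      = p - 1 := by
    rw [← Fintype.card_subtype, ← Nat.card_eq_fintype_card, card_fiber p 1,
      if_neg one_ne_zero]
  have h2 : (Finset.univ.filter fun ad : ZMod p × ZMod p => ¬ ad.1 * ad.2 = 1).card
      = p ^ 2 - (p - 1) := by
    have := Finset.card_filter_add_card_filter_not (s := Finset.univ)
      (p := fun ad : ZMod p × ZMod p => ad.1 * ad.2 = 1)
    rw [h1, Finset.card_univ, Fintype.card_prod, ZMod.card] at this
    have hpp : p * p = p ^ 2 := (sq p).symm
    rw [hpp] at this
    omega
  rw [h1, h2, smul_eq_mul, smul_eq_mul]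
  have e1 : 1 ≤ p := by omega
  have e2 : 1 ≤ 2 * p := by omega
  have e3 : p - 1 ≤ p ^ 2 := le_trans (Nat.sub_le p 1) (Nat.le_self_pow two_ne_zero p)
  have e4 : p ≤ p ^ 3 := Nat.le_self_pow (by norm_num) p
  zify [e1, e2, e3, e4]
  ring

private lemma card_tr :
    Nat.card {M : Matrix.SpecialLinearGroup (Fin 2) (ZMod p) //
        Matrix.trace (M : Matrix (Fin 2) (Fin 2) (ZMod p)) = 2} = p ^ 2 := by
  have hp : 2 ≤ p := (Fact.out : p.Prime).two_le
  rw [Nat.card_congr (trEquiv p), Nat.card_eq_fintype_card, Fintype.card_sigma]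
  simp only [← Nat.card_eq_fintype_card, card_fiber, neg_eq_zero,
    pow_eq_zero_iff (two_ne_zero), sub_eq_zero]
  rw [Finset.sum_ite, Finset.sum_const, Finset.sum_const]
  have h1 : (Finset.univ.filter fun a : ZMod p => a = 1).card = 1 := by
    rw [Finset.filter_eq']
    simp
  have h2 : (Finset.univ.filter fun a : ZMod p => ¬ a = 1).card = p - 1 := by
    have := Finset.card_filter_add_card_filter_not (s := Finset.univ)
      (p := fun a : ZMod p => a = 1)
    rw [h1, Finset.card_univ, ZMod.card] at this
    omega
  rw [h1, h2, smul_eq_mul, smul_eq_mul]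
  have e1 : 1 ≤ p := by omega
  have e2 : 1 ≤ 2 * p := by omega
  zify [e1, e2]
  ring

end aux

theorem proportion_trace_two_SL2_zmod_p (p : ℕ) [Fact p.Prime] :
    (Nat.card {M : Matrix.SpecialLinearGroup (Fin 2) (ZMod p) //
        Matrix.trace (M : Matrix (Fin 2) (Fin 2) (ZMod p)) = 2} : ℚ) /
      (Nat.card (Matrix.SpecialLinearGroup (Fin 2) (ZMod p)) : ℚ)
      = (p : ℚ) / ((p : ℚ) ^ 2 - 1) := by
  have hp : 2 ≤ p := (Fact.out : p.Prime).two_le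
  have hpq : (2 : ℚ) ≤ (p : ℚ) := by exact_mod_cast hp
  have hle : p ≤ p ^ 3 := Nat.le_self_pow (by norm_num) p
  rw [card_tr, card_SL]
  push_cast [Nat.cast_sub hle]
  have hp0 : (0 : ℚ) < p := by linarith
  have h4 : (4 : ℚ) ≤ (p : ℚ) ^ 2 := by nlinarith
  have h1 : (p : ℚ) ^ 2 - 1 ≠ 0 := ne_of_gt (by linarith)
  have h2 : (p : ℚ) ^ 3 - p ≠ 0 := by
    have he : (p : ℚ) ^ 3 - p = p * ((p : ℚ) ^ 2 - 1) := by ring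
    rw [he]
    exact mul_ne_zero (ne_of_gt hp0) h1
  field_simp
end

section
/- The modular group PSL(2,ℤ) is isomorphic to the free product C₂ * C₃ of cyclic groups of orders 2 and 3. -/
/-!
In `PSL(2, ℤ)` the image `s` of `S` has order 2 and the image `u` of `TS` has order 3, so they
define a homomorphism `C₂ ∗ C₃ → PSL(2, ℤ)`. It is onto because `S` and `T` generate
`SL(2, ℤ)` and `T = ±(TS)S`. It is injective by the ping-pong lemma for the action on the upper
half plane: `s : z ↦ -1/z` maps the right half plane into the left one, while `u : z ↦ 1 - 1/z`
and `u² : z ↦ -1/(z - 1)` map the left half plane into the right one.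
-/

open Function Pointwise Cardinal UpperHalfPlane ModularGroup Matrix.SpecialLinearGroup
open scoped MatrixGroups Monoid.Coprod

namespace ZMod

variable {M : Type*} [Monoid M] (n : ℕ) [NeZero n] (g : M) (hg : g ^ n = 1)

def powHom : Multiplicative (ZMod n) →* M where
  toFun k := g ^ k.toAdd.val
  map_one' := by simp
  map_mul' x y := by
    simp only [toAdd_mul, ZMod.val_add, ← pow_eq_pow_mod _ hg, pow_add]

variable {n g}

lemma powHom_ofAdd_one [Fact (1 < n)] : powHom n g hg (.ofAdd 1) = g := by
  simp [powHom, ZMod.val_one]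

lemma exists_powHom_eq_pow_of_ne_one {x : Multiplicative (ZMod n)} (hx : x ≠ 1) :
    ∃ k, 0 < k ∧ k < n ∧ powHom n g hg x = g ^ k :=
  ⟨x.toAdd.val, by simpa [Nat.pos_iff_ne_zero] using hx, x.toAdd.val_lt, rfl⟩

end ZMod

namespace Monoid.Coprod

universe u

variable {M N : Type u} [Group M] [Group N]

instance instGroupCond : ∀ b : Bool, Group (cond b M N)
  | true => ‹Group M›
  | false => ‹Group N›

def toCoprodI : M ∗ N →* CoprodI (fun b => cond b M N) :=
  lift (CoprodI.of (M := fun b => cond b M N) (i := true))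
    (CoprodI.of (M := fun b => cond b M N) (i := false))

def ofCoprodI : CoprodI (fun b => cond b M N) →* M ∗ N :=
  CoprodI.lift fun | true => inl | false => inr

lemma ofCoprodI_comp_toCoprodI : (ofCoprodI.comp toCoprodI : M ∗ N →* M ∗ N) = .id _ := by
  ext <;> simp [toCoprodI, ofCoprodI]

lemma toCoprodI_injective : Injective (toCoprodI : M ∗ N →* _) :=
  LeftInverse.injective (DFunLike.congr_fun ofCoprodI_comp_toCoprodI)

lemma lift_eq_coprodILift_comp_toCoprodI {G : Type*} [Group G] (f : M →* G) (g : N →* G) :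
    lift f g = (CoprodI.lift fun | true => f | false => g).comp toCoprodI := by
  ext <;> simp [toCoprodI]

theorem lift_injective_of_ping_pong {G α : Type*} [Group G] [MulAction G α]
    (f : M →* G) (g : N →* G) (hcard : 3 ≤ #M ∨ 3 ≤ #N) (X Y : Set α)
    (hX : X.Nonempty) (hY : Y.Nonempty) (hXY : Disjoint X Y)
    (hf : ∀ m, m ≠ 1 → f m • Y ⊆ X) (hg : ∀ n, n ≠ 1 → g n • X ⊆ Y) :
    Injective (lift f g) := by
  rw [lift_eq_coprodILift_comp_toCoprodI, MonoidHom.coe_comp]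
  refine .comp (CoprodI.lift_injective_of_ping_pong _ ?_ (fun b => cond b X Y) ?_ ?_ ?_)
    toCoprodI_injective
  · exact .inr (hcard.elim (⟨true, ·⟩) (⟨false, ·⟩))
  · exact fun | true => hX | false => hY
  · exact pairwise_disjoint_on_bool.mpr hXY
  · rintro (_ | _) (_ | _) hne
    exacts [absurd rfl hne, hg, hf, absurd rfl hne]

end Monoid.Coprod

namespace ModularGroup

lemma S_sq : S ^ 2 = -1 := by decide

lemma T_mul_S_pow_three : (T * S) ^ 3 = -1 := by decide

lemma T_mul_S_sq : (T * S) ^ 2 = S * T⁻¹ := by decide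

lemma neg_one_mem_center : (-1 : SL(2, ℤ)) ∈ Subgroup.center SL(2, ℤ) :=
  Subgroup.mem_center_iff.mpr fun A => by simp

lemma eq_one_or_eq_neg_one_of_mem_center {A : SL(2, ℤ)} (hA : A ∈ Subgroup.center SL(2, ℤ)) :
    A = 1 ∨ A = -1 := by
  obtain ⟨r, hr, hrA⟩ := mem_center_iff.mp hA
  rcases mul_self_eq_one_iff.mp (by simpa [sq] using hr) with rfl | rfl
  · exact .inl (Subtype.ext (by simpa using hrA.symm))
  · exact .inr (Subtype.ext (by simpa using hrA.symm))

lemma smul_eq_self_of_mem_center {A : SL(2, ℤ)} (hA : A ∈ Subgroup.center SL(2, ℤ)) (z : ℍ) :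
    A • z = z := by
  rcases eq_one_or_eq_neg_one_of_mem_center hA with rfl | rfl
  · exact one_smul _ z
  · exact (SL_neg_smul 1 z).trans (one_smul _ z)

end ModularGroup

noncomputable instance : MulAction PSL(2, ℤ) ℍ :=
  .compHom ℍ <| QuotientGroup.lift _ (MulAction.toPermHom SL(2, ℤ) ℍ) fun _ hA =>
    Equiv.ext (smul_eq_self_of_mem_center hA)

namespace UpperHalfPlane

lemma re_S_smul (z : ℍ) : (S • z).re = -z.re / Complex.normSq z := by
  rw [modular_S_smul, mk_re, Complex.inv_re, Complex.normSq_neg, Complex.neg_re, coe_re]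

variable {z : ℍ}

lemma re_S_smul_neg (hz : 0 < z.re) : (S • z).re < 0 := by
  rw [re_S_smul]
  exact div_neg_of_neg_of_pos (neg_neg_iff_pos.mpr hz) z.normSq_pos

lemma re_S_smul_pos (hz : z.re < 0) : 0 < (S • z).re := by
  rw [re_S_smul]
  exact div_pos (neg_pos.mpr hz) z.normSq_pos

lemma re_T_mul_S_smul_pos (hz : z.re < 0) : 0 < ((T * S) • z).re := by
  rw [mul_smul, modular_T_smul, vadd_re]
  linarith [re_S_smul_pos hz]

lemma re_T_mul_S_sq_smul_pos (hz : z.re < 0) : 0 < ((T * S) ^ 2 • z).re := by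
  rw [T_mul_S_sq, mul_smul, ← zpow_neg_one, modular_T_zpow_smul]
  refine re_S_smul_pos ?_
  rw [vadd_re]
  push_cast
  linarith

end UpperHalfPlane

namespace ModularGroup

lemma coe_neg_one : ((-1 : SL(2, ℤ)) : PSL(2, ℤ)) = 1 :=
  (QuotientGroup.eq_one_iff _).mpr neg_one_mem_center

lemma coe_S_pow_two : (S : PSL(2, ℤ)) ^ 2 = 1 := by
  rw [← QuotientGroup.mk_pow, S_sq, coe_neg_one]

lemma coe_T_mul_S_pow_three : ((T * S : SL(2, ℤ)) : PSL(2, ℤ)) ^ 3 = 1 := by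
  rw [← QuotientGroup.mk_pow, T_mul_S_pow_three, coe_neg_one]

noncomputable def freeProductHom : Multiplicative (ZMod 2) ∗ Multiplicative (ZMod 3) →* PSL(2, ℤ) :=
  Monoid.Coprod.lift (ZMod.powHom 2 _ coe_S_pow_two) (ZMod.powHom 3 _ coe_T_mul_S_pow_three)

lemma freeProductHom_surjective : Surjective freeProductHom := by
  have hS : (S : PSL(2, ℤ)) ∈ freeProductHom.range :=
    ⟨.inl (.ofAdd 1), by simp [freeProductHom, ZMod.powHom_ofAdd_one]⟩
  have hTS : ((T * S : SL(2, ℤ)) : PSL(2, ℤ)) ∈ freeProductHom.range :=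
    ⟨.inr (.ofAdd 1), by simp [freeProductHom, ZMod.powHom_ofAdd_one]⟩
  have hT : (T : PSL(2, ℤ)) ∈ freeProductHom.range := by
    have : ((T * S : SL(2, ℤ)) : PSL(2, ℤ)) * S = T := by
      rw [← QuotientGroup.mk_mul, mul_assoc, ← sq, S_sq, QuotientGroup.mk_mul, coe_neg_one,
        mul_one]
    exact this ▸ mul_mem hTS hS
  rw [← MonoidHom.range_eq_top, eq_top_iff,
    ← MonoidHom.range_eq_top.mpr (QuotientGroup.mk'_surjective _), MonoidHom.range_eq_map,
    ← SpecialLinearGroup.SL2Z_generators, MonoidHom.map_closure, Subgroup.closure_le]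
  rintro _ ⟨A, hA | hA, rfl⟩ <;> subst hA
  exacts [hS, hT]

lemma freeProductHom_injective : Injective freeProductHom := by
  refine Monoid.Coprod.lift_injective_of_ping_pong _ _ (.inr (by simp)) {z : ℍ | z.re < 0}
    {z | 0 < z.re} ⟨⟨-1 + .I, by simp⟩, by simp⟩ ⟨⟨1 + .I, by simp⟩, by simp⟩
    (Set.disjoint_left.mpr fun z (hz : z.re < 0) hz' => lt_asymm hz hz') ?_ ?_
  · intro m hm
    obtain ⟨k, hk0, hk2, hm⟩ := ZMod.exists_powHom_eq_pow_of_ne_one coe_S_pow_two hm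
    obtain rfl : k = 1 := by omega
    rw [hm, pow_one]
    rintro _ ⟨z, hz, rfl⟩
    exact re_S_smul_neg hz
  · intro m hm
    obtain ⟨k, hk0, hk3, hm⟩ := ZMod.exists_powHom_eq_pow_of_ne_one coe_T_mul_S_pow_three hm
    rw [hm, ← QuotientGroup.mk_pow]
    rintro _ ⟨z, hz, rfl⟩
    interval_cases k
    exacts [pow_one (T * S) ▸ re_T_mul_S_smul_pos hz, re_T_mul_S_sq_smul_pos hz]

end ModularGroup

theorem psl2z_iso_free_product_C2_C3 :
    Nonempty ((Matrix.SpecialLinearGroup (Fin 2) ℤ ⧸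
        Subgroup.center (Matrix.SpecialLinearGroup (Fin 2) ℤ)) ≃*
      Monoid.Coprod (Multiplicative (ZMod 2)) (Multiplicative (ZMod 3))) :=
  ⟨(MulEquiv.ofBijective freeProductHom
    ⟨freeProductHom_injective, freeProductHom_surjective⟩).symm⟩
end
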